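/- arXiv:1409.8569 — 5 statements merged into one kernel-verified Lean document; each statement's English description precedes it below -/
import Mathlib

section
/- Let X be a complex Banach space, Y ⊆ X a finite-dimensional subspace, G ⊆ ℂ an open set, and n ≥ 1 an integer. Suppose F : G → B(X) is analytic (holomorphic as a map into the Banach space of bounded operators) and range(F(λ)) ⊆ Y for every λ ∈ G, so that Y is an invariant subspace of each F(λ). Then the function λ ↦ ∏_μ (1 − μ)·exp(∑_{j=1}^{n−1} μ^j/j), where the product runs over the multiset of roots in ℂ (counted with multiplicity) of the characteristic polynomial of the restriction of F(λ) to Y, is analytic on G. -/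
open scoped Classical

/-- The restriction of a bounded operator `T` to a subspace `Y`, provided `Y` is
invariant under `T` (junk value `0` otherwise). -/
noncomputable def restrictTo {X : Type*} [NormedAddCommGroup X] [NormedSpace ℂ X]
    (Y : Submodule ℂ X) (T : X →L[ℂ] X) : Y →ₗ[ℂ] Y :=
  if h : ∀ x ∈ Y, T x ∈ Y then (T : X →ₗ[ℂ] X).restrict h else 0

/-!
Compressing `F w` by a continuous projection onto `Y` gives an analytic family `T w` of operators
on `Y` that agrees with the restriction of `F w` to `Y` for `w ∈ G`. The coefficients of the
characteristic polynomial `χ_w` of `T w` are polynomials in matrix entries, hence analytic. The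
product equals `χ_w(1) · exp (∑_{j < n-1} p_{j+1}(w) / (j + 1))`, where `p_k(w)` is the `k`-th
power sum of the roots of `χ_w`; by Vieta's formulas and Newton's identities every `p_k` is a
polynomial in the coefficients of `χ_w`, so the whole expression is analytic.
-/

open Polynomial Finset

theorem Multiset.sum_map_pow_eq_esymm_sub_sum {R : Type*} [CommRing R]
    (s : Multiset R) {k : ℕ} (hk : 0 < k) :
    (s.map (· ^ k)).sum = (-1) ^ (k + 1) * k * s.esymm k -
      ∑ a ∈ HasAntidiagonal.antidiagonal k with a.1 ∈ Set.Ioo 0 k,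
        (-1) ^ a.1 * s.esymm a.1 * (s.map (· ^ a.2)).sum := by
  have hesymm (i : ℕ) : MvPolynomial.eval (fun x : s => (x : R))
      (MvPolynomial.esymm s R i) = s.esymm i := by
    simpa using MvPolynomial.aeval_esymm_eq_multiset_esymm s R i (fun x : s => (x : R))
  have hpsum (i : ℕ) : MvPolynomial.eval (fun x : s => (x : R))
      (MvPolynomial.psum s R i) = (s.map (· ^ i)).sum := by
    simp only [MvPolynomial.psum, map_sum, map_pow, MvPolynomial.eval_X]
    exact congrArg Multiset.sum (Multiset.map_univ s (· ^ i))
  simpa [hesymm, hpsum] using congrArg (MvPolynomial.eval fun x : s => (x : R))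
    (MvPolynomial.psum_eq_mul_esymm_sub_sum ↥s R k hk)

theorem Multiset.esymm_eq_zero_of_card_lt {R : Type*} [CommSemiring R] (s : Multiset R) {i : ℕ}
    (h : Multiset.card s < i) : s.esymm i = 0 := by
  simp [Multiset.esymm, Multiset.powersetCard_eq_empty _ h]

section CharpolyCoeff

variable {𝕜 E : Type*} [NontriviallyNormedField 𝕜] [NormedAddCommGroup E] [NormedSpace 𝕜 E]
  {z : E}

theorem Matrix.analyticAt_charpoly_coeff {n : Type*} [Fintype n] [DecidableEq n]
    {A : E → Matrix n n 𝕜} (hA : ∀ i j, AnalyticAt 𝕜 (fun w => A w i j) z) (k : ℕ) :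
    AnalyticAt 𝕜 (fun w => (A w).charpoly.coeff k) z := by
  have := AnalyticAt.aeval_mvPolynomial (fun ij : n × n => hA ij.1 ij.2)
    ((Matrix.charpoly.univ ℤ n).coeff k)
  simp only [MvPolynomial.aeval_eq_eval₂Hom, Matrix.charpoly.univ_coeff_eval₂Hom] at this
  exact this

theorem ContinuousLinearMap.analyticAt_charpoly_coeff [CompleteSpace 𝕜] {V : Type*}
    [NormedAddCommGroup V] [NormedSpace 𝕜 V] [FiniteDimensional 𝕜 V]
    {T : E → V →L[𝕜] V} (hT : AnalyticAt 𝕜 T z) (k : ℕ) :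
    AnalyticAt 𝕜 (fun w => (T w : V →ₗ[𝕜] V).charpoly.coeff k) z := by
  let b := Module.finBasis 𝕜 V
  simp only [← LinearMap.charpoly_toMatrix _ b]
  refine Matrix.analyticAt_charpoly_coeff (fun i j => ?_) k
  simp only [LinearMap.toMatrix_apply]
  exact ((LinearMap.toContinuousLinearMap (b.coord i)).comp
    (ContinuousLinearMap.apply 𝕜 V (b j))).analyticAt _ |>.comp hT

end CharpolyCoeff

section AnalyticFamilyOfPolynomials

variable {𝕜 E : Type*} [NontriviallyNormedField 𝕜] [NormedAddCommGroup E] [NormedSpace 𝕜 E]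
  {p : E → 𝕜[X]} {d : ℕ} {z : E}

theorem analyticAt_eval_of_coeff (hdeg : ∀ w, (p w).natDegree = d)
    (hcoeff : ∀ k, AnalyticAt 𝕜 (fun w => (p w).coeff k) z) (x : 𝕜) :
    AnalyticAt 𝕜 (fun w => (p w).eval x) z := by
  simp only [fun w => eval_eq_sum_range' (n := d + 1) (p := p w) (by rw [hdeg]; omega) x]
  exact Finset.analyticAt_fun_sum _ fun i _ => (hcoeff i).mul analyticAt_const

variable [IsAlgClosed 𝕜]

theorem analyticAt_esymm_roots_of_coeff (hmonic : ∀ w, (p w).Monic)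
    (hdeg : ∀ w, (p w).natDegree = d) (hcoeff : ∀ k, AnalyticAt 𝕜 (fun w => (p w).coeff k) z)
    (i : ℕ) : AnalyticAt 𝕜 (fun w => (p w).roots.esymm i) z := by
  have hcard (w : E) : Multiset.card (p w).roots = d := by
    rw [← hdeg w, (IsAlgClosed.splits (p w)).natDegree_eq_card_roots]
  by_cases hi : i ≤ d
  · have hvieta (w : E) : (p w).roots.esymm i = (-1) ^ i * (p w).coeff (d - i) := by
      rw [coeff_eq_esymm_roots_of_card (by rw [hcard, hdeg]) (by rw [hdeg]; omega),
        (hmonic w).leadingCoeff, hdeg, Nat.sub_sub_self hi, one_mul, ← mul_assoc, ← pow_add,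
        Even.neg_one_pow ⟨i, rfl⟩, one_mul]
    simp only [hvieta]
    exact analyticAt_const.mul (hcoeff _)
  · simp only [fun w => (p w).roots.esymm_eq_zero_of_card_lt ((hcard w).trans_lt (not_le.mp hi))]
    exact analyticAt_const

theorem analyticAt_sum_map_pow_roots_of_coeff (hmonic : ∀ w, (p w).Monic)
    (hdeg : ∀ w, (p w).natDegree = d) (hcoeff : ∀ k, AnalyticAt 𝕜 (fun w => (p w).coeff k) z)
    (k : ℕ) : AnalyticAt 𝕜 (fun w => ((p w).roots.map (· ^ k)).sum) z := by
  induction k using Nat.strong_induction_on with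
  | _ k ih =>
  rcases Nat.eq_zero_or_pos k with rfl | hk
  · simp only [pow_zero, Multiset.map_const', Multiset.sum_replicate, nsmul_eq_mul, mul_one,
      ← (IsAlgClosed.splits _).natDegree_eq_card_roots, hdeg]
    exact analyticAt_const
  simp only [fun w => Multiset.sum_map_pow_eq_esymm_sub_sum (p w).roots hk]
  have hesymm := analyticAt_esymm_roots_of_coeff hmonic hdeg hcoeff
  refine (analyticAt_const.mul (hesymm k)).sub (Finset.analyticAt_fun_sum _ fun a ha => ?_)
  rw [Finset.mem_filter, Finset.HasAntidiagonal.mem_antidiagonal, Set.mem_Ioo] at ha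
  exact (analyticAt_const.mul (hesymm a.1)).mul (ih a.2 (by omega))

end AnalyticFamilyOfPolynomials

theorem Multiset.prod_map_one_sub_mul_exp (s : Multiset ℂ) (m : ℕ) :
    (s.map fun μ => (1 - μ) *
      Complex.exp (∑ j ∈ Finset.range m, μ ^ (j + 1) / ((j : ℂ) + 1))).prod =
      (s.map (1 - ·)).prod *
        Complex.exp (∑ j ∈ Finset.range m, (s.map (· ^ (j + 1))).sum / ((j : ℂ) + 1)) := by
  have hswap : ∑ j ∈ Finset.range m, (s.map (· ^ (j + 1))).sum / ((j : ℂ) + 1) =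
      (s.map fun μ => ∑ j ∈ Finset.range m, μ ^ (j + 1) / ((j : ℂ) + 1)).sum := by
    simp only [← Multiset.sum_map_div]
    exact Multiset.sum_map_sum_map _ _
  rw [Multiset.prod_map_mul, hswap, Complex.exp_multiset_sum, Multiset.map_map]
  rfl

theorem Polynomial.Monic.eval_one_eq_prod_roots {K : Type*} [Field K] [IsAlgClosed K] {p : K[X]}
    (hp : p.Monic) :
    p.eval 1 = (p.roots.map (1 - ·)).prod := by
  conv_lhs => rw [(IsAlgClosed.splits p).eq_prod_roots_of_monic hp]
  simp [eval_multiset_prod, Multiset.map_map]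

theorem analyticAt_prod_map_roots_one_sub_mul_exp {E : Type*} [NormedAddCommGroup E]
    [NormedSpace ℂ E] {p : E → ℂ[X]} {d : ℕ} {z : E} (hmonic : ∀ w, (p w).Monic)
    (hdeg : ∀ w, (p w).natDegree = d) (hcoeff : ∀ k, AnalyticAt ℂ (fun w => (p w).coeff k) z)
    (m : ℕ) : AnalyticAt ℂ (fun w => ((p w).roots.map fun μ => (1 - μ) *
      Complex.exp (∑ j ∈ Finset.range m, μ ^ (j + 1) / ((j : ℂ) + 1))).prod) z := by
  simp only [Multiset.prod_map_one_sub_mul_exp, ← (hmonic _).eval_one_eq_prod_roots]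
  exact (analyticAt_eval_of_coeff hdeg hcoeff 1).mul (Finset.analyticAt_fun_sum _ fun j _ =>
    (analyticAt_sum_map_pow_roots_of_coeff hmonic hdeg hcoeff _).div_const).cexp

theorem restrictTo_eq_compression {X : Type*} [NormedAddCommGroup X] [NormedSpace ℂ X]
    {Y : Submodule ℂ X} {π : X →L[ℂ] Y} (hπ : ∀ y : Y, π y = y) {T : X →L[ℂ] X}
    (hT : LinearMap.range (T : X →ₗ[ℂ] X) ≤ Y) :
    restrictTo Y T = ((π ∘L T ∘L Y.subtypeL : Y →L[ℂ] Y) : Y →ₗ[ℂ] Y) := by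
  have hinv : ∀ x ∈ Y, T x ∈ Y := fun x _ => hT ⟨x, rfl⟩
  rw [restrictTo, dif_pos hinv]
  ext y
  exact congrArg Subtype.val (hπ ⟨T y, hinv y y.2⟩).symm

theorem statement0_general {X : Type*} [NormedAddCommGroup X] [NormedSpace ℂ X]
    (Y : Submodule ℂ X) [FiniteDimensional ℂ Y]
    (G : Set ℂ) (hG : IsOpen G) (n : ℕ)
    (F : ℂ → X →L[ℂ] X)
    (hFanalytic : ∀ z ∈ G, AnalyticAt ℂ F z)
    (hFrange : ∀ z ∈ G, LinearMap.range ((F z : X →ₗ[ℂ] X)) ≤ Y) :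
    ∀ z ∈ G, AnalyticAt ℂ (fun w =>
      (((restrictTo Y (F w)).charpoly.roots).map
        (fun μ => (1 - μ) *
          Complex.exp (∑ j ∈ Finset.range (n - 1), μ ^ (j + 1) / ((j : ℂ) + 1)))).prod) z := by
  intro z hz
  obtain ⟨π, hπ⟩ := Submodule.ClosedComplemented.of_finiteDimensional Y
  have hT : AnalyticAt ℂ (fun w => π ∘L F w ∘L Y.subtypeL) z :=
    (((ContinuousLinearMap.compL ℂ Y X Y π).comp
      ((ContinuousLinearMap.compL ℂ Y X X).flip Y.subtypeL)).analyticAt (F z)).comp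
      (hFanalytic z hz)
  refine (analyticAt_prod_map_roots_one_sub_mul_exp
    (fun _ => LinearMap.charpoly_monic _) (fun _ => LinearMap.charpoly_natDegree _)
    (ContinuousLinearMap.analyticAt_charpoly_coeff hT) (n - 1)).congr ?_
  filter_upwards [hG.mem_nhds hz] with w hw
  rw [restrictTo_eq_compression hπ (hFrange w hw)]

/-- Let `X` be a complex Banach space, `Y ⊆ X` a finite-dimensional
subspace, `G ⊆ ℂ` open and `n ≥ 1`. If `F : G → B(X)` is analytic and
`range (F λ) ⊆ Y` for every `λ ∈ G`, then the function
`λ ↦ ∏_μ (1 − μ)·exp(∑_{j=1}^{n−1} μ^j/j)`, the product running over the multiset of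
roots (with multiplicity) of the characteristic polynomial of the restriction of
`F λ` to `Y`, is analytic on `G`. -/
theorem statement0 {X : Type*} [NormedAddCommGroup X] [NormedSpace ℂ X] [CompleteSpace X]
    (Y : Submodule ℂ X) [FiniteDimensional ℂ Y]
    (G : Set ℂ) (hG : IsOpen G) (n : ℕ) (hn : 1 ≤ n)
    (F : ℂ → X →L[ℂ] X)
    (hFanalytic : ∀ z ∈ G, AnalyticAt ℂ F z)
    (hFrange : ∀ z ∈ G, LinearMap.range ((F z : X →ₗ[ℂ] X)) ≤ Y) :
    ∀ z ∈ G, AnalyticAt ℂ (fun w =>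
      (((restrictTo Y (F w)).charpoly.roots).map
        (fun μ => (1 - μ) *
          Complex.exp (∑ j ∈ Finset.range (n - 1), μ ^ (j + 1) / ((j : ℂ) + 1)))).prod) z :=
  statement0_general Y G hG n F hFanalytic hFrange
end

section
/- Let X be a complex Banach space, L₁, L₂ ∈ B(X) with F := L₂ − L₁ of finite rank, let p > 0, and for λ ∈ ℂ ∖ σ(L₁) let d(λ) := det_{⌈p⌉}(1 − F·(λ − L₁)^{−1}). Then for every λ₀ ∈ ℂ ∖ σ(L₁): d(λ₀) = 0 if and only if λ₀ is an eigenvalue of L₂ (i.e., L₂x = λ₀x for some x ≠ 0). -/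
/-! The factors `(1 - μ) exp(∑ μʲ/j)` of `det_n` vanish only at `μ = 1`, so `d(λ) = 0` iff the
finite-rank operator `K := F (λ - L₁)⁻¹` has eigenvalue `1` on its range, i.e. a nonzero fixed
vector. Substituting `y = (λ - L₁) x`, the equation `K y = y` becomes `F x = (λ - L₁) x`, that is
`L₂ x = λ x`. -/

open scoped Classical

/-- The `n`-regularized determinant `det_n(1 − F)` of a finite-rank operator `F`
(junk value `0` if `F` is not of finite rank). -/
noncomputable def regDet {X : Type*} [NormedAddCommGroup X] [NormedSpace ℂ X]
    (n : ℕ) (F : X →L[ℂ] X) : ℂ :=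
  if h : FiniteDimensional ℂ (LinearMap.range (F : X →ₗ[ℂ] X)) then
    letI := h
    (((F : X →ₗ[ℂ] X).restrict
        (p := LinearMap.range (F : X →ₗ[ℂ] X)) (q := LinearMap.range (F : X →ₗ[ℂ] X))
        (fun x _ => LinearMap.mem_range_self _ x)).charpoly.roots.map
      (fun μ => (1 - μ) * Complex.exp (∑ j ∈ Finset.range (n - 1), μ ^ (j + 1) / ((j : ℂ) + 1)))).prod
  else 0

/-- The resolvent `(z − L)⁻¹` of a bounded operator `L` (junk value `0` for `z ∈ σ(L)`). -/
noncomputable def resolv {X : Type*} [NormedAddCommGroup X] [NormedSpace ℂ X]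
    (L : X →L[ℂ] X) (z : ℂ) : X →L[ℂ] X :=
  Ring.inverse (algebraMap ℂ (X →L[ℂ] X) z - L)

namespace Module.End

section CommRing

variable {R M : Type*} [CommRing R] [AddCommGroup M] [Module R M]

theorem hasEigenvalue_iff_exists_apply_eq_smul {f : End R M} {μ : R} :
    f.HasEigenvalue μ ↔ ∃ x, x ≠ 0 ∧ f x = μ • x := by
  simp only [hasEigenvalue_iff, Submodule.ne_bot_iff, mem_eigenspace_iff, and_comm]

/-- The substitution `y = A x` underlying the Birman–Schwinger principle. -/
theorem hasEigenvalue_one_comp_symm_iff (F : End R M) (A : M ≃ₗ[R] M) :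
    HasEigenvalue (F ∘ₗ A.symm.toLinearMap) 1 ↔ ∃ x, x ≠ 0 ∧ F x = A x := by
  simp only [hasEigenvalue_iff_exists_apply_eq_smul, one_smul, LinearMap.comp_apply,
    LinearEquiv.coe_coe]
  constructor
  · rintro ⟨y, hy, hFy⟩
    exact ⟨A.symm y, by simpa using hy, by rw [hFy, A.apply_symm_apply]⟩
  · rintro ⟨x, hx, hFx⟩
    exact ⟨A x, by simpa using hx, by rw [A.symm_apply_apply, hFx]⟩

end CommRing

variable {K V : Type*} [Field K] [AddCommGroup V] [Module K V]

/-- Eigenvectors for a nonzero eigenvalue lie in the range, so nothing is lost by restricting. -/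
theorem hasEigenvalue_restrict_range_iff (f : End K V) {μ : K} (hμ : μ ≠ 0) :
    HasEigenvalue (f.restrict (p := LinearMap.range f) (q := LinearMap.range f)
      (fun x _ => LinearMap.mem_range_self f x)) μ ↔ f.HasEigenvalue μ := by
  simp only [hasEigenvalue_iff_exists_apply_eq_smul]
  constructor
  · rintro ⟨⟨x, _⟩, hx, hfx⟩
    exact ⟨x, fun h => hx (Subtype.ext h), congrArg Subtype.val hfx⟩
  · rintro ⟨x, hx, hfx⟩
    have hx_range : x ∈ LinearMap.range f := ⟨μ⁻¹ • x, by rw [map_smul, hfx, inv_smul_smul₀ hμ]⟩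
    exact ⟨⟨x, hx_range⟩, fun h => hx (congrArg Subtype.val h), Subtype.ext hfx⟩

end Module.End

open Module.End

theorem regDet_eq_zero_iff {X : Type*} [NormedAddCommGroup X] [NormedSpace ℂ X] (n : ℕ)
    (F : X →L[ℂ] X) [hF : FiniteDimensional ℂ (LinearMap.range (F : X →ₗ[ℂ] X))] :
    regDet n F = 0 ↔ HasEigenvalue (F : Module.End ℂ X) 1 := by
  have factor_eq_zero_iff (μ : ℂ) :
      (1 - μ) * Complex.exp (∑ j ∈ Finset.range (n - 1), μ ^ (j + 1) / ((j : ℂ) + 1)) = 0 ↔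
        μ = 1 := by
    rw [mul_eq_zero, sub_eq_zero, eq_comm]
    simp [Complex.exp_ne_zero]
  rw [regDet, dif_pos hF, Multiset.prod_eq_zero_iff, Multiset.mem_map]
  simp only [factor_eq_zero_iff, exists_eq_right]
  rw [Polynomial.mem_roots (LinearMap.charpoly_monic _).ne_zero,
    ← hasEigenvalue_iff_isRoot_charpoly, hasEigenvalue_restrict_range_iff _ one_ne_zero]

theorem hasEigenvalue_one_sub_comp_resolv_iff {X : Type*} [NormedAddCommGroup X]
    [NormedSpace ℂ X] (L₁ L₂ : X →L[ℂ] X) {lam : ℂ} (hlam : lam ∉ spectrum ℂ L₁) :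
    HasEigenvalue (((L₂ - L₁) ∘L resolv L₁ lam : X →L[ℂ] X) : Module.End ℂ X) 1 ↔
      HasEigenvalue (L₂ : Module.End ℂ X) lam := by
  obtain ⟨u, hu⟩ := spectrum.notMem_iff.mp hlam
  set A := ContinuousLinearEquiv.unitsEquiv ℂ X u
  have hresolv : resolv L₁ lam = A.symm := by
    rw [resolv, ← hu]
    exact (ContinuousLinearMap.ringInverse_equiv A).trans (ContinuousLinearMap.inverse_equiv A)
  have hA (x : X) : A x = lam • x - L₁ x := by
    simp [A, hu, Algebra.algebraMap_eq_smul_one]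
  rw [hresolv]
  refine (hasEigenvalue_one_comp_symm_iff _ A.toLinearEquiv).trans ?_
  rw [hasEigenvalue_iff_exists_apply_eq_smul]
  refine exists_congr fun x => and_congr_right fun _ => ?_
  simp [hA]

theorem statement3_general {X : Type*} [NormedAddCommGroup X] [NormedSpace ℂ X]
    (L₁ L₂ : X →L[ℂ] X)
    (hF : FiniteDimensional ℂ (LinearMap.range ((L₂ - L₁ : X →L[ℂ] X) : X →ₗ[ℂ] X)))
    (p : ℝ)
    (lam : ℂ) (hlam : lam ∉ spectrum ℂ L₁) :
    regDet ⌈p⌉₊ ((L₂ - L₁) ∘L resolv L₁ lam) = 0 ↔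
      ∃ x : X, x ≠ 0 ∧ L₂ x = lam • x := by
  have : FiniteDimensional ℂ
      (LinearMap.range (((L₂ - L₁) ∘L resolv L₁ lam : X →L[ℂ] X) : X →ₗ[ℂ] X)) :=
    Submodule.finiteDimensional_of_le (LinearMap.range_comp_le_range _ _)
  rw [regDet_eq_zero_iff, hasEigenvalue_one_sub_comp_resolv_iff L₁ L₂ hlam]
  exact hasEigenvalue_iff_exists_apply_eq_smul

/-- Let `L₁, L₂` be bounded operators on a complex Banach space with
`F := L₂ − L₁` of finite rank, `p > 0`, and for `λ ∉ σ(L₁)` let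
`d(λ) := det_{⌈p⌉}(1 − (L₂ − L₁)·(λ − L₁)⁻¹)`. Then for every `λ₀ ∉ σ(L₁)`:
`d(λ₀) = 0` iff `λ₀` is an eigenvalue of `L₂`. -/
theorem statement3 {X : Type*} [NormedAddCommGroup X] [NormedSpace ℂ X] [CompleteSpace X]
    (L₁ L₂ : X →L[ℂ] X)
    (hF : FiniteDimensional ℂ (LinearMap.range ((L₂ - L₁ : X →L[ℂ] X) : X →ₗ[ℂ] X)))
    (p : ℝ) (hp : 0 < p)
    (lam : ℂ) (hlam : lam ∉ spectrum ℂ L₁) :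
    regDet ⌈p⌉₊ ((L₂ - L₁) ∘L resolv L₁ lam) = 0 ↔
      ∃ x : X, x ≠ 0 ∧ L₂ x = lam • x :=
  statement3_general L₁ L₂ hF p lam hlam
end

section
/- Let h be an analytic function on the open unit disk 𝔻 ⊆ ℂ with |h(z)| ≤ M for all z ∈ 𝔻 and |h(0)| = 1, and let 0 < r < 1. Then the set Z_r := {z ∈ ℂ : |z| ≤ r, h(z) = 0} is finite, and n(h; r)·log(1/r) ≤ log M, where n(h; r) := ∑_{z ∈ Z_r} ord_z(h) is the number of zeros of h in the closed disk of radius r counted with multiplicity (ord_z(h) denotes the order of vanishing of h at z). -/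
/-!
By Jensen's inequality, for every `r < ρ < 1` the zeros of `h` in the closed disk of radius
`r`, counted by the divisor of `h`, satisfy `n(h; r) · log (ρ / r) ≤ log M`; letting `ρ → 1`
gives the bound. The divisor is finitely supported on compact sets, and its value at a zero is
the analytic order of `h` there, which the derivative characterisation of the order identifies
with `vanishingOrder`.
-/

/-- The order of vanishing of `h` at `z`: the largest `n` such that all derivatives of
order `< n` of `h` vanish at `z` (equal to the multiplicity of `z` as a zero when `h`
is analytic near `z` and not identically zero). -/
noncomputable def vanishingOrder (h : ℂ → ℂ) (z : ℂ) : ℕ :=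
  sSup {n : ℕ | ∀ k < n, iteratedDeriv k h z = 0}

open Metric MeromorphicOn Filter Topology Set

lemma AnalyticAt.vanishingOrder_eq_analyticOrderNatAt {f : ℂ → ℂ} {z : ℂ}
    (hf : AnalyticAt ℂ f z) : vanishingOrder f z = analyticOrderNatAt f z := by
  have hset : {n : ℕ | ∀ k < n, iteratedDeriv k f z = 0} =
      {n : ℕ | (n : ℕ∞) ≤ analyticOrderAt f z} := by
    ext n
    exact (natCast_le_analyticOrderAt_iff_iteratedDeriv_eq_zero hf).symm
  rw [vanishingOrder, hset, analyticOrderNatAt]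
  cases analyticOrderAt f z with
  -- if `f` vanishes near `z`, both sides are junk `0`: `sSup` of an unbounded set in `ℕ` is `0`
  | top => simp
  | coe k => exact (congrArg sSup (by ext; simp)).trans (csSup_Iic (a := k))

lemma AnalyticOnNhd.divisor_apply_eq_vanishingOrder {f : ℂ → ℂ} {U : Set ℂ} {z : ℂ}
    (hf : AnalyticOnNhd ℂ f U) (hz : z ∈ U) : divisor f U z = vanishingOrder f z := by
  rw [hf.divisor_apply hz, (hf z hz).vanishingOrder_eq_analyticOrderNatAt, analyticOrderNatAt]
  cases analyticOrderAt f z <;> simp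

lemma AnalyticOnNhd.support_divisor {f : ℂ → ℂ} {U : Set ℂ} (hf : AnalyticOnNhd ℂ f U)
    (hfin : ∀ z ∈ U, analyticOrderAt f z ≠ ⊤) :
    (divisor f U).support = U ∩ f ⁻¹' {0} := by
  ext z
  by_cases hz : z ∈ U
  · simp [hf.divisor_apply hz, hz, analyticOrderAt_ne_zero, hf z hz, hfin z hz]
  · simp only [hz, false_and, mem_inter_iff, iff_false]
    exact fun hzD => hz ((divisor f U).supportWithinDomain hzD)

theorem AnalyticOnNhd.finsum_divisor_mul_log_le {c : ℂ} {r R M : ℝ} {f : ℂ → ℂ}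
    (hr : 0 < r) (hrR : r < R) (hM : 1 ≤ M) (hf : AnalyticOnNhd ℂ f (ball c R))
    (hfc : f c ≠ 0) (hbound : ∀ z ∈ ball c R, ‖f z‖ ≤ M) :
    ((∑ᶠ u, divisor f (closedBall c r) u : ℤ) : ℝ) * Real.log (R / r) ≤
      Real.log (M / ‖f c‖) := by
  have hlog : 0 < Real.log (R / r) := Real.log_pos ((one_lt_div hr).mpr hrR)
  rw [← le_div_iff₀ hlog]
  have hcont : ContinuousAt (fun ρ => Real.log (M / ‖f c‖) / Real.log (ρ / r)) R := by
    refine continuousAt_const.div (ContinuousAt.log (by fun_prop) ?_) hlog.ne'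
    exact (div_pos (hr.trans hrR) hr).ne'
  refine ge_of_tendsto (hcont.tendsto.mono_left (nhdsWithin_le_nhds (s := Iio R))) ?_
  filter_upwards [Ioo_mem_nhdsLT hrR] with ρ hρ
  have hρ0 : 0 < ρ := hr.trans hρ.1
  have hρ_abs : |ρ| = ρ := abs_of_pos hρ0
  have hsub : closedBall c |ρ| ⊆ ball c R := by
    rw [hρ_abs]; exact closedBall_subset_ball hρ.2
  have hjensen := AnalyticOnNhd.sum_divisor_le (c := c) (r := r) (R := ρ) (M := M)
    (by rwa [abs_of_pos hr]) (by rw [abs_of_pos hr, hρ_abs]; exact hρ.1) hM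
    (hf.mono hsub) hfc
    (fun z hz => hbound z (hsub (sphere_subset_closedBall hz)))
  rwa [abs_of_pos hr] at hjensen

/-- Let `h` be analytic on the open unit disk with `|h| ≤ M` and
`|h(0)| = 1`, and let `0 < r < 1`. Then the zero set of `h` in the closed disk of
radius `r` is finite, and `n(h; r)·log(1/r) ≤ log M`, where `n(h; r)` is the number of
zeros counted with multiplicity. -/
theorem statement8 (h : ℂ → ℂ) (M : ℝ)
    (hana : ∀ z ∈ Metric.ball (0 : ℂ) 1, AnalyticAt ℂ h z)
    (hbdd : ∀ z ∈ Metric.ball (0 : ℂ) 1, ‖h z‖ ≤ M)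
    (h0 : ‖h 0‖ = 1)
    (r : ℝ) (hr0 : 0 < r) (hr1 : r < 1) :
    ∃ hfin : {z : ℂ | ‖z‖ ≤ r ∧ h z = 0}.Finite,
      ((∑ z ∈ hfin.toFinset, vanishingOrder h z : ℕ) : ℝ) * Real.log (1 / r) ≤
        Real.log M := by
  have hh : AnalyticOnNhd ℂ h (ball 0 1) := hana
  have hh0 : h 0 ≠ 0 := norm_ne_zero_iff.mp (by simp [h0])
  have hball : closedBall (0 : ℂ) r ⊆ ball 0 1 := closedBall_subset_ball hr1
  have hord : ∀ z ∈ closedBall (0 : ℂ) r, analyticOrderAt h z ≠ ⊤ := fun z hz =>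
    hh.analyticOrderAt_ne_top_of_isPreconnected (convex_ball 0 1).isPreconnected
      (mem_ball_self one_pos) (hball hz)
      (by rw [analyticOrderAt_eq_zero.mpr (.inr hh0)]; exact ENat.zero_ne_top)
  have hzeros : {z : ℂ | ‖z‖ ≤ r ∧ h z = 0} = (divisor h (closedBall 0 r)).support := by
    rw [(hh.mono hball).support_divisor hord]
    ext z
    simp
  have hfin : {z : ℂ | ‖z‖ ≤ r ∧ h z = 0}.Finite :=
    hzeros ▸ (divisor h _).finiteSupport (isCompact_closedBall 0 r)
  refine ⟨hfin, ?_⟩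
  have hsum : ∑ᶠ u, divisor h (closedBall 0 r) u =
      ∑ z ∈ hfin.toFinset, (vanishingOrder h z : ℤ) := by
    rw [finsum_eq_sum_of_support_subset (s := hfin.toFinset) _
      (by rw [Finite.coe_toFinset, hzeros])]
    refine Finset.sum_congr rfl fun z hz => (hh.mono hball).divisor_apply_eq_vanishingOrder ?_
    simpa using (hfin.mem_toFinset.mp hz).1
  have hM : 1 ≤ M := h0 ▸ hbdd 0 (mem_ball_self one_pos)
  simpa [hsum, h0] using hh.finsum_divisor_mul_log_le hr0 hr1 hM hh0 hbdd
end

section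
/- Let X = ℓ¹(ℕ, ℂ), let L₀ ∈ B(X) be the right shift, L₀(x₁, x₂, x₃, …) = (0, x₁, x₂, …) (equivalently L₀δ_n = δ_{n+1} on the standard basis), let b = (b_k)_{k≥1} ∈ ℓ^∞(ℕ, ℂ), and let K ∈ B(X) be the rank-one operator Kf := (∑_{k=1}^{∞} b_k f_k)·δ₁. Set L := L₀ + K. Then for every λ ∈ ℂ with |λ| > 1: λ is an eigenvalue of L if and only if ∑_{k=1}^{∞} b_k λ^{−k} = 1. -/
/-!
An eigenvector of `L = L₀ + K` for `λ` satisfies `f n = λ f (n + 1)` in every coordinate but the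
first, so it is `f 0` times the geometric sequence `λ⁻¹ ^ n`, which lies in `ℓ¹` exactly because
`|λ| > 1`. The first coordinate of `L f = λ f` then reads `f 0 · ∑ b_k λ⁻ᵏ = λ f 0`.
-/

theorem eq_mul_inv_pow_of_eq_mul_succ {𝕜 : Type*} [Field 𝕜] {x : ℕ → 𝕜} {c : 𝕜} (hc : c ≠ 0)
    (hx : ∀ n, x n = c * x (n + 1)) (n : ℕ) : x n = x 0 * c⁻¹ ^ n := by
  induction n with
  | zero => simp
  | succ n ih =>
    rw [pow_succ, ← mul_assoc, ← ih, hx n, mul_comm c, mul_assoc, mul_inv_cancel₀ hc, mul_one]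

theorem tsum_mul_inv_pow_succ_eq_one_iff {𝕜 : Type*} [Field 𝕜] [TopologicalSpace 𝕜]
    [IsTopologicalRing 𝕜] [T2Space 𝕜] (b : ℕ → 𝕜) {c : 𝕜} (hc : c ≠ 0) :
    ∑' k, b k * c⁻¹ ^ (k + 1) = 1 ↔ ∑' k, b k * c⁻¹ ^ k = c := by
  simp_rw [pow_succ, ← mul_assoc, tsum_mul_right]
  rw [mul_inv_eq_one₀ hc]

section NormedField

variable {𝕜 : Type*} [NormedField 𝕜]

theorem memℓp_one_geometric {r : 𝕜} (hr : ‖r‖ < 1) : Memℓp (fun n => r ^ n) 1 :=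
  memℓp_gen (by simpa [norm_pow] using summable_geometric_of_lt_one (norm_nonneg r) hr)

namespace ShiftAddRankOne

variable (b : ℕ → 𝕜) {T : lp (fun _ : ℕ => 𝕜) 1 → lp (fun _ : ℕ => 𝕜) 1}

theorem apply_eq_smul_iff (hT_zero : ∀ f, T f 0 = ∑' k, b k * f k)
    (hT_succ : ∀ f n, T f (n + 1) = f n) {c : 𝕜} {f : lp (fun _ : ℕ => 𝕜) 1} :
    T f = c • f ↔ ∑' k, b k * f k = c * f 0 ∧ ∀ n, f n = c * f (n + 1) := by
  rw [lp.ext_iff, funext_iff, ← Nat.and_forall_add_one]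
  simp only [lp.coeFn_smul, Pi.smul_apply, smul_eq_mul, hT_zero, hT_succ]

theorem exists_ne_zero_apply_eq_smul_iff (hT_zero : ∀ f, T f 0 = ∑' k, b k * f k)
    (hT_succ : ∀ f n, T f (n + 1) = f n) {c : 𝕜} (hc : 1 < ‖c‖) :
    (∃ f : lp (fun _ : ℕ => 𝕜) 1, f ≠ 0 ∧ T f = c • f) ↔ ∑' k, b k * c⁻¹ ^ k = c := by
  have hc₀ : c ≠ 0 := norm_pos_iff.mp (one_pos.trans hc)
  simp_rw [apply_eq_smul_iff b hT_zero hT_succ]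
  constructor
  · rintro ⟨f, hf, hsum, hshift⟩
    have hgeom := eq_mul_inv_pow_of_eq_mul_succ hc₀ hshift
    have hf₀ : f 0 ≠ 0 := fun h => hf (lp.ext (funext fun n => by simp [hgeom n, h]))
    refine mul_left_cancel₀ hf₀ ?_
    calc f 0 * ∑' k, b k * c⁻¹ ^ k = ∑' k, b k * f k := by
          rw [← tsum_mul_left]; congr 1; funext k; rw [hgeom k]; ring
      _ = f 0 * c := by rw [hsum, mul_comm]
  · intro hsum
    have hr : ‖c⁻¹‖ < 1 := by rw [norm_inv]; exact inv_lt_one_of_one_lt₀ hc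
    refine ⟨⟨_, memℓp_one_geometric hr⟩, fun h => ?_, ?_, fun n => ?_⟩
    · simpa using congr_arg (fun f : lp (fun _ : ℕ => 𝕜) 1 => f 0) h
    · simpa using hsum
    · simp [pow_succ', ← mul_assoc, mul_inv_cancel₀ hc₀]

end ShiftAddRankOne

end NormedField

theorem statement18_general (b : ℕ → ℂ)
    (L₀ K : lp (fun _ : ℕ => ℂ) 1 →L[ℂ] lp (fun _ : ℕ => ℂ) 1)
    (hL₀ : ∀ f : lp (fun _ : ℕ => ℂ) 1,
      (L₀ f : ∀ _ : ℕ, ℂ) 0 = 0 ∧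
      ∀ n : ℕ, (L₀ f : ∀ _ : ℕ, ℂ) (n + 1) = (f : ∀ _ : ℕ, ℂ) n)
    (hK : ∀ f : lp (fun _ : ℕ => ℂ) 1,
      (K f : ∀ _ : ℕ, ℂ) 0 = (∑' k : ℕ, b k * (f : ∀ _ : ℕ, ℂ) k) ∧
      ∀ n : ℕ, (K f : ∀ _ : ℕ, ℂ) (n + 1) = 0)
    (lam : ℂ) (hlam : 1 < ‖lam‖) :
    (∃ f : lp (fun _ : ℕ => ℂ) 1, f ≠ 0 ∧ (L₀ + K) f = lam • f) ↔
      ∑' k : ℕ, b k * lam⁻¹ ^ (k + 1) = 1 := by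
  have hT_zero (f : lp (fun _ : ℕ => ℂ) 1) : (L₀ + K) f 0 = ∑' k, b k * f k := by
    simp [(hL₀ f).1, (hK f).1]
  have hT_succ (f : lp (fun _ : ℕ => ℂ) 1) (n : ℕ) : (L₀ + K) f (n + 1) = f n := by
    simp [(hL₀ f).2 n, (hK f).2 n]
  rw [ShiftAddRankOne.exists_ne_zero_apply_eq_smul_iff b hT_zero hT_succ hlam,
    tsum_mul_inv_pow_succ_eq_one_iff b (norm_pos_iff.mp (one_pos.trans hlam))]

/-- Let `X = ℓ¹(ℕ, ℂ)`, let `L₀` be the right shift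
`L₀(x₀, x₁, x₂, …) = (0, x₀, x₁, …)`, let `b ∈ ℓ^∞(ℕ, ℂ)` and let `K` be the rank-one
operator `K f = (∑_k b_k f_k)·δ₀`. Set `L := L₀ + K`. Then for every `λ ∈ ℂ` with
`|λ| > 1`: `λ` is an eigenvalue of `L` iff `∑_k b_k λ^{−(k+1)} = 1` (the indexing here
starts at `0`, so this is the condition `∑_{k=1}^∞ b_k λ^{−k} = 1` of the paper). -/
theorem statement18 (b : ℕ → ℂ) (hb : Memℓp b ⊤)
    (L₀ K : lp (fun _ : ℕ => ℂ) 1 →L[ℂ] lp (fun _ : ℕ => ℂ) 1)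
    (hL₀ : ∀ f : lp (fun _ : ℕ => ℂ) 1,
      (L₀ f : ∀ _ : ℕ, ℂ) 0 = 0 ∧
      ∀ n : ℕ, (L₀ f : ∀ _ : ℕ, ℂ) (n + 1) = (f : ∀ _ : ℕ, ℂ) n)
    (hK : ∀ f : lp (fun _ : ℕ => ℂ) 1,
      (K f : ∀ _ : ℕ, ℂ) 0 = (∑' k : ℕ, b k * (f : ∀ _ : ℕ, ℂ) k) ∧
      ∀ n : ℕ, (K f : ∀ _ : ℕ, ℂ) (n + 1) = 0)
    (lam : ℂ) (hlam : 1 < ‖lam‖) :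
    (∃ f : lp (fun _ : ℕ => ℂ) 1, f ≠ 0 ∧ (L₀ + K) f = lam • f) ↔
      ∑' k : ℕ, b k * lam⁻¹ ^ (k + 1) = 1 :=
  statement18_general b L₀ K hL₀ hK lam hlam
end

section
/- Let b = (b_k)_{k≥1} ∈ ℓ^∞(ℕ, ℂ) and define h(w) := 1 − ∑_{k=1}^{∞} b_k w^k for w in the open unit disk 𝔻. Suppose the set Z := {w ∈ 𝔻 : h(w) = 0} satisfies ∑_{w ∈ Z} (1 − |w|) = ∞ (i.e., the family (1 − |w|)_{w∈Z} is not summable). Let X = ℓ¹(ℕ, ℂ), let L₀ be the right shift L₀(x₁, x₂, …) = (0, x₁, x₂, …), let K be the rank-one operator Kf := (∑_{k=1}^{∞} b_k f_k)·δ₁, and set L := L₀ + K. Then, with E := {λ ∈ ℂ : |λ| > 1 and λ is an eigenvalue of L}, the family ((|λ| − 1))_{λ ∈ E} is not summable, i.e., ∑_{λ ∈ E} (|λ| − 1) = ∞. (In particular, ‖L₀‖ = 1 and L − L₀ has rank one, yet the eigenvalues of L outside the closed unit disk fail the order-one summability condition that always holds for rank-one perturbations in Hilbert space.) -/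
/-!
If `h(w) = 0` with `0 < |w| < 1`, the geometric sequence `(wⁿ)` lies in `ℓ¹` and is an
eigenvector of `L` with eigenvalue `1/w`: the shift sends it to `w⁻¹ • (wⁿ)` off the first
coordinate, and at the first coordinate `∑ b_k w^k = 1/w` is exactly `h(w) = 0`. So
`w ↦ 1/w` injects `Z` into `E`, and `1/|w| − 1 ≥ 1 − |w|` turns summability over `E` into
summability over `Z`.
-/

open Metric

theorem ne_zero_of_one_sub_tsum_mul_pow_succ_eq_zero {𝕜 : Type*} [Ring 𝕜] [Nontrivial 𝕜]
    [TopologicalSpace 𝕜] {b : ℕ → 𝕜} {w : 𝕜} (hw : 1 - ∑' k : ℕ, b k * w ^ (k + 1) = 0) :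
    w ≠ 0 := by
  rintro rfl
  simp at hw

section Companion

variable {𝕜 : Type*} [Field 𝕜] [TopologicalSpace 𝕜] [IsTopologicalRing 𝕜] [T2Space 𝕜]

theorem tsum_mul_pow_eq_inv {b : ℕ → 𝕜} {w : 𝕜} (hw : 1 - ∑' k : ℕ, b k * w ^ (k + 1) = 0) :
    ∑' k : ℕ, b k * w ^ k = w⁻¹ := by
  have hw0 := ne_zero_of_one_sub_tsum_mul_pow_succ_eq_zero hw
  have hshift : ∑' k : ℕ, b k * w ^ (k + 1) = w * ∑' k : ℕ, b k * w ^ k := by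
    rw [← tsum_mul_left]
    exact tsum_congr fun k => by ring
  refine eq_inv_of_mul_eq_one_left ?_
  rw [mul_comm, ← hshift]
  linear_combination -hw

end Companion

section Geometric

variable {𝕜 : Type*} [NormedField 𝕜]

theorem memℓp_one_pow {w : 𝕜} (hw : ‖w‖ < 1) : Memℓp (fun n : ℕ => w ^ n) 1 :=
  memℓp_gen <| by
    simpa only [ENNReal.toReal_one, Real.rpow_one, norm_pow] using
      summable_geometric_of_lt_one (norm_nonneg w) hw

noncomputable def geomLp (w : 𝕜) (hw : ‖w‖ < 1) : lp (fun _ : ℕ => 𝕜) 1 :=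
  ⟨fun n => w ^ n, memℓp_one_pow hw⟩

@[simp]
theorem geomLp_apply {w : 𝕜} (hw : ‖w‖ < 1) (n : ℕ) : geomLp w hw n = w ^ n :=
  rfl

theorem geomLp_ne_zero {w : 𝕜} (hw : ‖w‖ < 1) : geomLp w hw ≠ 0 := fun h => by
  simpa using congrArg (fun f : lp (fun _ : ℕ => 𝕜) 1 => f 0) h

theorem apply_geomLp_eq_inv_smul (b : ℕ → 𝕜)
    {L : lp (fun _ : ℕ => 𝕜) 1 → lp (fun _ : ℕ => 𝕜) 1}
    (hL_zero : ∀ f, L f 0 = ∑' k : ℕ, b k * f k) (hL_succ : ∀ f n, L f (n + 1) = f n)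
    {w : 𝕜} (hw : ‖w‖ < 1) (hzero : 1 - ∑' k : ℕ, b k * w ^ (k + 1) = 0) :
    L (geomLp w hw) = w⁻¹ • geomLp w hw := by
  have hw0 := ne_zero_of_one_sub_tsum_mul_pow_succ_eq_zero hzero
  ext n
  rw [lp.coeFn_smul, Pi.smul_apply, smul_eq_mul]
  cases n with
  | zero => simpa [hL_zero] using tsum_mul_pow_eq_inv hzero
  | succ n => rw [hL_succ, geomLp_apply, geomLp_apply, pow_succ', inv_mul_cancel_left₀ hw0]

end Geometric

theorem one_sub_le_inv_sub_one {a : ℝ} (ha : 0 < a) : 1 - a ≤ a⁻¹ - 1 := by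
  have hsq : 0 ≤ (a - 1) ^ 2 / a := by positivity
  have hexpand : (a - 1) ^ 2 / a = a + a⁻¹ - 2 := by field_simp; ring
  linarith

theorem statement19_general (b : ℕ → ℂ)
    (hZ : ¬ Summable (fun w : {w : ℂ | w ∈ Metric.ball (0 : ℂ) 1 ∧
        1 - ∑' k : ℕ, b k * w ^ (k + 1) = 0} => 1 - ‖(w : ℂ)‖))
    (L₀ K : lp (fun _ : ℕ => ℂ) 1 →L[ℂ] lp (fun _ : ℕ => ℂ) 1)
    (hL₀ : ∀ f : lp (fun _ : ℕ => ℂ) 1,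
      (L₀ f : ∀ _ : ℕ, ℂ) 0 = 0 ∧
      ∀ n : ℕ, (L₀ f : ∀ _ : ℕ, ℂ) (n + 1) = (f : ∀ _ : ℕ, ℂ) n)
    (hK : ∀ f : lp (fun _ : ℕ => ℂ) 1,
      (K f : ∀ _ : ℕ, ℂ) 0 = (∑' k : ℕ, b k * (f : ∀ _ : ℕ, ℂ) k) ∧
      ∀ n : ℕ, (K f : ∀ _ : ℕ, ℂ) (n + 1) = 0) :
    ¬ Summable (fun z : {z : ℂ | 1 < ‖z‖ ∧
        ∃ f : lp (fun _ : ℕ => ℂ) 1, f ≠ 0 ∧ (L₀ + K) f = z • f} =>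
      ‖(z : ℂ)‖ - 1) := by
  set Z := {w : ℂ | w ∈ ball (0 : ℂ) 1 ∧ 1 - ∑' k : ℕ, b k * w ^ (k + 1) = 0}
  set E := {z : ℂ | 1 < ‖z‖ ∧ ∃ f : lp (fun _ : ℕ => ℂ) 1, f ≠ 0 ∧ (L₀ + K) f = z • f}
  intro hE
  refine hZ ?_
  have hnorm : ∀ w : ℂ, w ∈ ball (0 : ℂ) 1 → ‖w‖ < 1 := fun _ => mem_ball_zero_iff.1
  have heigen : ∀ w ∈ Z, w⁻¹ ∈ E := by
    rintro w ⟨hw, hzero⟩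
    have hw0 := ne_zero_of_one_sub_tsum_mul_pow_succ_eq_zero hzero
    refine ⟨by rw [norm_inv]; exact one_lt_inv₀ (norm_pos_iff.2 hw0) |>.2 (hnorm w hw),
      geomLp w (hnorm w hw), geomLp_ne_zero _, apply_geomLp_eq_inv_smul b ?_ ?_ _ hzero⟩
    · intro f; simp [(hL₀ f).1, (hK f).1]
    · intro f n; simp [(hL₀ f).2, (hK f).2]
  have hinj : Function.Injective (fun w : Z => (⟨(w : ℂ)⁻¹, heigen w w.2⟩ : E)) :=
    fun w v h => Subtype.ext <| inv_injective <| congrArg Subtype.val h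
  refine (hE.comp_injective hinj).of_nonneg_of_le (fun w => by linarith [hnorm w w.2.1])
    fun w => ?_
  simpa only [Function.comp_apply, norm_inv] using one_sub_le_inv_sub_one
    (norm_pos_iff.2 (ne_zero_of_one_sub_tsum_mul_pow_succ_eq_zero w.2.2))

/-- Let `b ∈ ℓ^∞(ℕ, ℂ)` and `h(w) := 1 − ∑_k b_k w^{k+1}` on the open
unit disk, and suppose the zeros `Z` of `h` in the disk satisfy
`∑_{w ∈ Z} (1 − |w|) = ∞` (the family is not summable). Let `X = ℓ¹(ℕ, ℂ)`, `L₀` the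
right shift, `K` the rank-one operator `K f = (∑_k b_k f_k)·δ₀` and `L := L₀ + K`.
Then, with `E` the set of eigenvalues of `L` of modulus greater than `1`, the family
`(|λ| − 1)_{λ ∈ E}` is not summable. -/
theorem statement19 (b : ℕ → ℂ) (hb : Memℓp b ⊤)
    (hZ : ¬ Summable (fun w : {w : ℂ | w ∈ Metric.ball (0 : ℂ) 1 ∧
        1 - ∑' k : ℕ, b k * w ^ (k + 1) = 0} => 1 - ‖(w : ℂ)‖))
    (L₀ K : lp (fun _ : ℕ => ℂ) 1 →L[ℂ] lp (fun _ : ℕ => ℂ) 1)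
    (hL₀ : ∀ f : lp (fun _ : ℕ => ℂ) 1,
      (L₀ f : ∀ _ : ℕ, ℂ) 0 = 0 ∧
      ∀ n : ℕ, (L₀ f : ∀ _ : ℕ, ℂ) (n + 1) = (f : ∀ _ : ℕ, ℂ) n)
    (hK : ∀ f : lp (fun _ : ℕ => ℂ) 1,
      (K f : ∀ _ : ℕ, ℂ) 0 = (∑' k : ℕ, b k * (f : ∀ _ : ℕ, ℂ) k) ∧
      ∀ n : ℕ, (K f : ∀ _ : ℕ, ℂ) (n + 1) = 0) :
    ¬ Summable (fun z : {z : ℂ | 1 < ‖z‖ ∧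
        ∃ f : lp (fun _ : ℕ => ℂ) 1, f ≠ 0 ∧ (L₀ + K) f = z • f} =>
      ‖(z : ℂ)‖ - 1) :=
  statement19_general b hZ L₀ K hL₀ hK
end
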